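/- Let n ≥ 7 be odd, and let O₁ = ((n-2,n-1,n),(1,2,…,n-2)), O₂ = ((n-2,n-1,n),(1,2,…,n)), O₃ = ((3,4,…,n),(1,2,3)), O₄ = ((n-2,n-1,n),(1,2,…,n-2,n,n-1)), O₅ = ((3,4,…,n),(1,2,…,n)), O₆ = ((3,4,…,n),(1,2,3,n,n-1,…,4)). Then T(O₁) ≃ O₄, T⁻¹(O₂) ≃ O₄, S(O₂) ≃ O₆, T⁻¹(O₃) ≃ O₅, and T(O₃) ≃ O₆, where ≃ denotes equivalence by simultaneous conjugation. -/

import Mathlib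

open Equiv

/-- The permutation of `Fin n` given by 1-based cycle notation `(a1, ..., ak)`:
each listed square `a` (an element of `{1, ..., n}`) corresponds to `a - 1 : Fin n`,
and the cycle sends each listed element to the next one, the last back to the first. -/
def cyc (n : ℕ) (l : List ℕ) : Equiv.Perm (Fin n) :=
  (l.filterMap fun a => if h : a - 1 < n then some (⟨a - 1, h⟩ : Fin n) else none).formPerm

/-- Equivalence of origami pairs by simultaneous conjugation. -/
def OrigamiEquiv {n : ℕ} (p q : Equiv.Perm (Fin n) × Equiv.Perm (Fin n)) : Prop :=
  ∃ g : Equiv.Perm (Fin n), g * p.1 * g⁻¹ = q.1 ∧ g * p.2 * g⁻¹ = q.2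

/-- The action of `T`: `T(h,v) = (h, v h⁻¹)`. -/
def Tact {n : ℕ} (p : Equiv.Perm (Fin n) × Equiv.Perm (Fin n)) :
    Equiv.Perm (Fin n) × Equiv.Perm (Fin n) := (p.1, p.2 * p.1⁻¹)

/-- The action of `T⁻¹`: `T⁻¹(h,v) = (h, v h)`. -/
def TinvAct {n : ℕ} (p : Equiv.Perm (Fin n) × Equiv.Perm (Fin n)) :
    Equiv.Perm (Fin n) × Equiv.Perm (Fin n) := (p.1, p.2 * p.1)

/-- The action of `S`: `S(h,v) = (h v⁻¹, v)`. -/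
def Sact {n : ℕ} (p : Equiv.Perm (Fin n) × Equiv.Perm (Fin n)) :
    Equiv.Perm (Fin n) × Equiv.Perm (Fin n) := (p.1 * p.2⁻¹, p.2)

/-- The action of `S⁻¹`: `S⁻¹(h,v) = (h v, v)`. -/
def SinvAct {n : ℕ} (p : Equiv.Perm (Fin n) × Equiv.Perm (Fin n)) :
    Equiv.Perm (Fin n) × Equiv.Perm (Fin n) := (p.1 * p.2, p.2)

/-- `O₁ = ((n-2,n-1,n), (1,2,...,n-2))` -/
def OB1 (n : ℕ) : Equiv.Perm (Fin n) × Equiv.Perm (Fin n) :=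
  (cyc n [n - 2, n - 1, n], cyc n (List.range' 1 (n - 2)))

/-- `O₂ = ((n-2,n-1,n), (1,2,...,n))` -/
def OB2 (n : ℕ) : Equiv.Perm (Fin n) × Equiv.Perm (Fin n) :=
  (cyc n [n - 2, n - 1, n], cyc n (List.range' 1 n))

/-- `O₃ = ((3,4,...,n), (1,2,3))` -/
def OB3 (n : ℕ) : Equiv.Perm (Fin n) × Equiv.Perm (Fin n) :=
  (cyc n (List.range' 3 (n - 2)), cyc n [1, 2, 3])

/-- `O₄ = ((n-2,n-1,n), (1,2,...,n-2,n,n-1))` -/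
def OB4 (n : ℕ) : Equiv.Perm (Fin n) × Equiv.Perm (Fin n) :=
  (cyc n [n - 2, n - 1, n], cyc n (List.range' 1 (n - 2) ++ [n, n - 1]))

/-- `O₅ = ((3,4,...,n), (1,2,...,n))` -/
def OB5 (n : ℕ) : Equiv.Perm (Fin n) × Equiv.Perm (Fin n) :=
  (cyc n (List.range' 3 (n - 2)), cyc n (List.range' 1 n))

/-- `O₆ = ((3,4,...,n), (1,2,3,n,n-1,...,4))` -/
def OB6 (n : ℕ) : Equiv.Perm (Fin n) × Equiv.Perm (Fin n) :=
  (cyc n (List.range' 3 (n - 2)), cyc n ([1, 2, 3] ++ (List.range' 4 (n - 3)).reverse))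

section AuxOrigami

variable {n : ℕ}

lemma filterMap_eq_pmap : ∀ (L : List ℕ) (h : ∀ a ∈ L, a - 1 < n),
    (L.filterMap fun a => if h : a - 1 < n then some (⟨a - 1, h⟩ : Fin n) else none)
      = L.pmap (fun a ha => (⟨a - 1, ha⟩ : Fin n)) h := by
  intro L
  induction L with
  | nil => intro h; simp
  | cons a L ih =>
    intro h
    rw [List.filterMap_cons, dif_pos (h a List.mem_cons_self), List.pmap,
      ih (fun b hb => h b (List.mem_cons_of_mem a hb))]

lemma cyc_eq_pmap (L : List ℕ) (h : ∀ a ∈ L, a - 1 < n) :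
    cyc n L = (L.pmap (fun a ha => (⟨a - 1, ha⟩ : Fin n)) h).formPerm := by
  rw [cyc, filterMap_eq_pmap L h]

lemma cyc_apply_of_ne (L : List ℕ) (hlt : ∀ a ∈ L, a - 1 < n) (i : Fin n)
    (hni : ∀ a ∈ L, a - 1 ≠ (i : ℕ)) : cyc n L i = i := by
  rw [cyc_eq_pmap L hlt]
  apply List.formPerm_apply_of_notMem
  rw [List.mem_pmap]
  rintro ⟨a, ha, hEq⟩
  exact hni a ha (by simpa using congrArg Fin.val hEq)

lemma cyc_apply_getElem (L : List ℕ) (hlt : ∀ a ∈ L, a - 1 < n) (h1 : ∀ a ∈ L, 1 ≤ a)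
    (hnd : L.Nodup) (j : ℕ) (hj : j < L.length) (i : Fin n)
    (hi : (i : ℕ) + 1 = L[j]) :
    ((cyc n L) i : ℕ) + 1 = L[(j + 1) % L.length]'(Nat.mod_lt _ (by omega)) := by
  rw [cyc_eq_pmap L hlt]
  have hnd' : (L.pmap (fun a ha => (⟨a - 1, ha⟩ : Fin n)) hlt).Nodup := by
    have hmap : (L.pmap (fun a ha => (⟨a - 1, ha⟩ : Fin n)) hlt).map Fin.val
        = L.map (fun a => a - 1) := by
      rw [List.map_pmap]
      exact List.pmap_eq_map _
    have hmapnd : (L.map (fun a => a - 1)).Nodup := by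
      refine List.Nodup.map_on ?_ hnd
      intro a ha b hb hEq
      have := h1 a ha; have := h1 b hb; omega
    rw [← hmap] at hmapnd
    exact hmapnd.of_map _
  have hj' : j < (L.pmap (fun a ha => (⟨a - 1, ha⟩ : Fin n)) hlt).length := by
    simpa using hj
  have hi' : i = (L.pmap (fun a ha => (⟨a - 1, ha⟩ : Fin n)) hlt)[j]'hj' := by
    rw [List.getElem_pmap]
    apply Fin.ext
    show (i : ℕ) = L[j]'(by simpa using hj') - 1
    omega
  rw [hi', List.formPerm_apply_getElem _ hnd']
  rw [List.getElem_pmap]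
  have hmem : L[(j + 1) % (L.pmap (fun a ha => (⟨a - 1, ha⟩ : Fin n)) hlt).length]'(by
      rw [List.length_pmap]; exact Nat.mod_lt _ (by omega)) ∈ L := List.getElem_mem _
  have := h1 _ hmem
  simp only [List.length_pmap] at *
  omega

lemma cyc_range'_apply (s m : ℕ) (hs : 1 ≤ s) (hsm : s + m ≤ n + 1) (i : Fin n) :
    ((cyc n (List.range' s m)) i : ℕ) =
      if (i : ℕ) + 1 < s ∨ s + m ≤ (i : ℕ) + 1 then (i : ℕ)
      else if (i : ℕ) + 2 < s + m then (i : ℕ) + 1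
      else s - 1 := by
  have hlt : ∀ a ∈ List.range' s m, a - 1 < n := by
    intro a ha; rw [List.mem_range'_1] at ha; have := i.isLt; omega
  have h1 : ∀ a ∈ List.range' s m, 1 ≤ a := by
    intro a ha; rw [List.mem_range'_1] at ha; omega
  by_cases hc : (i : ℕ) + 1 < s ∨ s + m ≤ (i : ℕ) + 1
  · rw [if_pos hc]
    have : cyc n (List.range' s m) i = i := by
      apply cyc_apply_of_ne _ hlt
      intro a ha; rw [List.mem_range'_1] at ha; omega
    rw [this]
  · rw [if_neg hc]
    push_neg at hc
    have hj : (i : ℕ) + 1 - s < (List.range' s m).length := by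
      rw [List.length_range']; omega
    have key := cyc_apply_getElem (List.range' s m) hlt h1 List.nodup_range' _ hj i
      (by rw [List.getElem_range'_1]; omega)
    rw [List.getElem_range'_1, List.length_range'] at key
    by_cases hc2 : (i : ℕ) + 2 < s + m
    · rw [if_pos hc2]
      rw [Nat.mod_eq_of_lt (by omega)] at key
      omega
    · rw [if_neg hc2]
      have hz : ((i : ℕ) + 1 - s + 1) % m = 0 := by
        have : (i : ℕ) + 1 - s + 1 = m := by omega
        simp [this]
      rw [hz] at key
      omega

lemma A_apply (hn : 7 ≤ n) (i : Fin n) :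
    ((cyc n [n - 2, n - 1, n]) i : ℕ) =
      if (i : ℕ) + 3 = n then n - 2
      else if (i : ℕ) + 2 = n then n - 1
      else if (i : ℕ) + 1 = n then n - 3
      else (i : ℕ) := by
  have hl : [n - 2, n - 1, n] = List.range' (n - 2) 3 := by
    have : List.range' (n - 2) 3 = [n - 2, n - 2 + 1, n - 2 + 1 + 1] := rfl
    rw [this]
    have e1 : n - 2 + 1 = n - 1 := by omega
    have e2 : n - 2 + 1 + 1 = n := by omega
    rw [e2, e1]
  rw [hl, cyc_range'_apply (n - 2) 3 (by omega) (by omega)]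
  have := i.isLt
  split_ifs <;> omega

lemma E_apply (hn : 7 ≤ n) (i : Fin n) :
    ((cyc n [1, 2, 3]) i : ℕ) =
      if (i : ℕ) < 2 then (i : ℕ) + 1
      else if (i : ℕ) = 2 then 0
      else (i : ℕ) := by
  have hl : [1, 2, 3] = List.range' 1 3 := rfl
  rw [hl, cyc_range'_apply 1 3 (by omega) (by omega)]
  have := i.isLt
  split_ifs <;> omega

lemma F_apply (hn : 7 ≤ n) (i : Fin n) :
    ((cyc n (List.range' 1 (n - 2) ++ [n, n - 1])) i : ℕ) =
      if (i : ℕ) + 3 < n then (i : ℕ) + 1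
      else if (i : ℕ) + 3 = n then n - 1
      else if (i : ℕ) + 2 = n then 0
      else n - 2 := by
  have hlen : (List.range' 1 (n - 2) ++ [n, n - 1]).length = n := by
    simp [List.length_range']
    omega
  have hmem : ∀ a ∈ (List.range' 1 (n - 2) ++ [n, n - 1]), (1 ≤ a ∧ a < n - 1) ∨ a = n ∨ a = n - 1 := by
    intro a ha
    rw [List.mem_append, List.mem_range'_1] at ha
    simp at ha
    omega
  have hlt : ∀ a ∈ (List.range' 1 (n - 2) ++ [n, n - 1]), a - 1 < n := by intro a ha; have := hmem a ha; omega
  have h1 : ∀ a ∈ (List.range' 1 (n - 2) ++ [n, n - 1]), 1 ≤ a := by intro a ha; have := hmem a ha; omega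
  have hnd : (List.range' 1 (n - 2) ++ [n, n - 1]).Nodup := by
    rw [List.nodup_append]
    refine ⟨List.nodup_range', by simp; omega, ?_⟩
    intro a ha b hb
    rw [List.mem_range'_1] at ha
    simp at hb
    omega
  have hget : ∀ j (hj : j < (List.range' 1 (n - 2) ++ [n, n - 1]).length),
      (List.range' 1 (n - 2) ++ [n, n - 1])[j]'hj = if j < n - 2 then j + 1 else if j = n - 2 then n else n - 1 := by
    intro j hj
    rw [hlen] at hj
    rcases lt_or_ge j (n - 2) with h | h
    · rw [List.getElem_append_left (by rw [List.length_range']; omega),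
        List.getElem_range'_1, if_pos h]
      omega
    · have hjl : (List.range' 1 (n - 2)).length ≤ j := by rw [List.length_range']; omega
      rw [List.getElem_append_right hjl]
      simp only [List.length_range']
      rcases Nat.eq_or_lt_of_le h with h2 | h2
      · have e : j - (n - 2) = 0 := by omega
        simp [e]
        split_ifs <;> omega
      · have e : j - (n - 2) = 1 := by omega
        simp [e]
        split_ifs <;> omega
  have hi := i.isLt
  by_cases c1 : (i : ℕ) + 1 < n - 2
  · have hj : (i : ℕ) < (List.range' 1 (n - 2) ++ [n, n - 1]).length := by omega
    have key := cyc_apply_getElem (List.range' 1 (n - 2) ++ [n, n - 1]) hlt h1 hnd ((i : ℕ)) hj i (by rw [hget]; split_ifs <;> omega)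
    obtain ⟨k, hk⟩ : ∃ k : ℕ, k = (i : ℕ) + 1 := ⟨_, rfl⟩
    have hidx : (((i : ℕ)) + 1) % (List.range' 1 (n - 2) ++ [n, n - 1]).length = k := by
      rw [hlen, hk]
      exact Nat.mod_eq_of_lt (by omega)
    simp only [hidx] at key
    rw [hget] at key
    split_ifs at key <;> split_ifs <;> omega
  by_cases c2 : (i : ℕ) + 1 = n - 2
  · have hj : (i : ℕ) < (List.range' 1 (n - 2) ++ [n, n - 1]).length := by omega
    have key := cyc_apply_getElem (List.range' 1 (n - 2) ++ [n, n - 1]) hlt h1 hnd ((i : ℕ)) hj i (by rw [hget]; split_ifs <;> omega)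
    obtain ⟨k, hk⟩ : ∃ k : ℕ, k = n - 2 := ⟨_, rfl⟩
    have hidx : (((i : ℕ)) + 1) % (List.range' 1 (n - 2) ++ [n, n - 1]).length = k := by
      rw [hlen, hk]
      rw [Nat.mod_eq_of_lt (by omega)]; omega
    simp only [hidx] at key
    rw [hget] at key
    split_ifs at key <;> split_ifs <;> omega
  by_cases c3 : (i : ℕ) + 1 = n
  · have hj : n - 2 < (List.range' 1 (n - 2) ++ [n, n - 1]).length := by omega
    have key := cyc_apply_getElem (List.range' 1 (n - 2) ++ [n, n - 1]) hlt h1 hnd (n - 2) hj i (by rw [hget]; split_ifs <;> omega)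
    obtain ⟨k, hk⟩ : ∃ k : ℕ, k = n - 1 := ⟨_, rfl⟩
    have hidx : ((n - 2) + 1) % (List.range' 1 (n - 2) ++ [n, n - 1]).length = k := by
      rw [hlen, hk]
      rw [Nat.mod_eq_of_lt (by omega)]; omega
    simp only [hidx] at key
    rw [hget] at key
    split_ifs at key <;> split_ifs <;> omega
  · have c4 : (i : ℕ) + 2 = n := by omega
    have hj : n - 1 < (List.range' 1 (n - 2) ++ [n, n - 1]).length := by omega
    have key := cyc_apply_getElem (List.range' 1 (n - 2) ++ [n, n - 1]) hlt h1 hnd (n - 1) hj i (by rw [hget]; split_ifs <;> omega)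
    obtain ⟨k, hk⟩ : ∃ k : ℕ, k = 0 := ⟨_, rfl⟩
    have hidx : ((n - 1) + 1) % (List.range' 1 (n - 2) ++ [n, n - 1]).length = k := by
      rw [hlen, hk]
      rw [Nat.sub_add_cancel (by omega), Nat.mod_self]
    simp only [hidx] at key
    rw [hget] at key
    split_ifs at key <;> split_ifs <;> omega

lemma G_apply (hn : 7 ≤ n) (i : Fin n) :
    ((cyc n ([1, 2, 3] ++ (List.range' 4 (n - 3)).reverse)) i : ℕ) =
      if (i : ℕ) < 2 then (i : ℕ) + 1
      else if (i : ℕ) = 2 then n - 1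
      else if (i : ℕ) = 3 then 0
      else (i : ℕ) - 1 := by
  have hlen : ([1, 2, 3] ++ (List.range' 4 (n - 3)).reverse).length = n := by
    simp [List.length_range']
    omega
  have hmem : ∀ a ∈ ([1, 2, 3] ++ (List.range' 4 (n - 3)).reverse), 1 ≤ a ∧ a ≤ n := by
    intro a ha
    rw [List.mem_append, List.mem_reverse, List.mem_range'_1] at ha
    simp at ha
    omega
  have hlt : ∀ a ∈ ([1, 2, 3] ++ (List.range' 4 (n - 3)).reverse), a - 1 < n := by intro a ha; have := hmem a ha; omega
  have h1 : ∀ a ∈ ([1, 2, 3] ++ (List.range' 4 (n - 3)).reverse), 1 ≤ a := by intro a ha; have := hmem a ha; omega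
  have hnd : ([1, 2, 3] ++ (List.range' 4 (n - 3)).reverse).Nodup := by
    rw [List.nodup_append]
    refine ⟨by decide, List.nodup_reverse.mpr List.nodup_range', ?_⟩
    intro a ha b hb
    rw [List.mem_reverse, List.mem_range'_1] at hb
    simp at ha
    omega
  have hget : ∀ j (hj : j < ([1, 2, 3] ++ (List.range' 4 (n - 3)).reverse).length),
      ([1, 2, 3] ++ (List.range' 4 (n - 3)).reverse)[j]'hj = if j = 0 then 1 else if j = 1 then 2 else if j = 2 then 3 else n + 3 - j := by
    intro j hj
    rw [hlen] at hj
    rcases Nat.lt_or_ge j 3 with h3 | h3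
    · interval_cases j <;> simp
    · have hk : ([1, 2, 3] : List ℕ).length ≤ j := by simpa using h3
      rw [List.getElem_append_right hk]
      simp only [List.length_cons, List.length_nil]
      rw [List.getElem_reverse]
      simp only [List.length_range']
      rw [List.getElem_range'_1]
      split_ifs <;> omega
  have hi := i.isLt
  by_cases c1 : (i : ℕ) < 3
  · have hj : (i : ℕ) < ([1, 2, 3] ++ (List.range' 4 (n - 3)).reverse).length := by omega
    have key := cyc_apply_getElem ([1, 2, 3] ++ (List.range' 4 (n - 3)).reverse) hlt h1 hnd ((i : ℕ)) hj i (by rw [hget]; split_ifs <;> omega)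
    obtain ⟨k, hk⟩ : ∃ k : ℕ, k = (i : ℕ) + 1 := ⟨_, rfl⟩
    have hidx : (((i : ℕ)) + 1) % ([1, 2, 3] ++ (List.range' 4 (n - 3)).reverse).length = k := by
      rw [hlen, hk]
      exact Nat.mod_eq_of_lt (by omega)
    simp only [hidx] at key
    rw [hget] at key
    split_ifs at key <;> split_ifs <;> omega
  by_cases c2 : (i : ℕ) = 3
  · have hj : n - 1 < ([1, 2, 3] ++ (List.range' 4 (n - 3)).reverse).length := by omega
    have key := cyc_apply_getElem ([1, 2, 3] ++ (List.range' 4 (n - 3)).reverse) hlt h1 hnd (n - 1) hj i (by rw [hget]; split_ifs <;> omega)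
    obtain ⟨k, hk⟩ : ∃ k : ℕ, k = 0 := ⟨_, rfl⟩
    have hidx : ((n - 1) + 1) % ([1, 2, 3] ++ (List.range' 4 (n - 3)).reverse).length = k := by
      rw [hlen, hk]
      rw [Nat.sub_add_cancel (by omega), Nat.mod_self]
    simp only [hidx] at key
    rw [hget] at key
    split_ifs at key <;> split_ifs <;> omega
  · have hj : n + 2 - (i : ℕ) < ([1, 2, 3] ++ (List.range' 4 (n - 3)).reverse).length := by omega
    have key := cyc_apply_getElem ([1, 2, 3] ++ (List.range' 4 (n - 3)).reverse) hlt h1 hnd (n + 2 - (i : ℕ)) hj i (by rw [hget]; split_ifs <;> omega)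
    obtain ⟨k, hk⟩ : ∃ k : ℕ, k = n + 3 - (i : ℕ) := ⟨_, rfl⟩
    have hidx : ((n + 2 - (i : ℕ)) + 1) % ([1, 2, 3] ++ (List.range' 4 (n - 3)).reverse).length = k := by
      rw [hlen, hk]
      rw [Nat.mod_eq_of_lt (by omega)]; omega
    simp only [hidx] at key
    rw [hget] at key
    split_ifs at key <;> split_ifs <;> omega

end AuxOrigami

def gP (n : ℕ) (hn : 7 ≤ n) : Equiv.Perm (Fin n) where
  toFun i := ⟨if (i : ℕ) = 0 then 2 else if (i : ℕ) = n - 2 then 0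
      else if (i : ℕ) = n - 1 then 1 else n - (i : ℕ), by have := i.isLt; split_ifs <;> omega⟩
  invFun i := ⟨if (i : ℕ) = 2 then 0 else if (i : ℕ) = 0 then n - 2
      else if (i : ℕ) = 1 then n - 1 else n - (i : ℕ), by have := i.isLt; split_ifs <;> omega⟩
  left_inv i := by
    have hlt := i.isLt
    apply Fin.ext
    show (if (if (i : ℕ) = 0 then 2 else if (i : ℕ) = n - 2 then 0
      else if (i : ℕ) = n - 1 then 1 else n - (i : ℕ)) = 2 then 0
      else if (if (i : ℕ) = 0 then 2 else if (i : ℕ) = n - 2 then 0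
      else if (i : ℕ) = n - 1 then 1 else n - (i : ℕ)) = 0 then n - 2
      else if (if (i : ℕ) = 0 then 2 else if (i : ℕ) = n - 2 then 0
      else if (i : ℕ) = n - 1 then 1 else n - (i : ℕ)) = 1 then n - 1
      else n - (if (i : ℕ) = 0 then 2 else if (i : ℕ) = n - 2 then 0
      else if (i : ℕ) = n - 1 then 1 else n - (i : ℕ))) = (i : ℕ)
    rcases (by omega : (i : ℕ) = 0 ∨ (i : ℕ) = n - 2 ∨ (i : ℕ) = n - 1 ∨
        ((i : ℕ) ≠ 0 ∧ (i : ℕ) ≠ n - 2 ∧ (i : ℕ) ≠ n - 1)) with h | h | h | ⟨e1, e2, e3⟩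
    · rw [if_pos h, if_pos (show (2 : ℕ) = 2 from rfl)]
      omega
    · rw [if_neg (show ¬(i : ℕ) = 0 by omega), if_pos h,
        if_neg (show ¬(0 : ℕ) = 2 by omega), if_pos (show (0 : ℕ) = 0 from rfl)]
      omega
    · rw [if_neg (show ¬(i : ℕ) = 0 by omega), if_neg (show ¬(i : ℕ) = n - 2 by omega),
        if_pos h, if_neg (show ¬(1 : ℕ) = 2 by omega), if_neg (show ¬(1 : ℕ) = 0 by omega),
        if_pos (show (1 : ℕ) = 1 from rfl)]
      omega
    · rw [if_neg e1, if_neg e2, if_neg e3, if_neg (show ¬n - (i : ℕ) = 2 by omega),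
        if_neg (show ¬n - (i : ℕ) = 0 by omega), if_neg (show ¬n - (i : ℕ) = 1 by omega)]
      omega
  right_inv i := by
    have hlt := i.isLt
    apply Fin.ext
    show (if (if (i : ℕ) = 2 then 0 else if (i : ℕ) = 0 then n - 2
      else if (i : ℕ) = 1 then n - 1 else n - (i : ℕ)) = 0 then 2
      else if (if (i : ℕ) = 2 then 0 else if (i : ℕ) = 0 then n - 2
      else if (i : ℕ) = 1 then n - 1 else n - (i : ℕ)) = n - 2 then 0
      else if (if (i : ℕ) = 2 then 0 else if (i : ℕ) = 0 then n - 2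
      else if (i : ℕ) = 1 then n - 1 else n - (i : ℕ)) = n - 1 then 1
      else n - (if (i : ℕ) = 2 then 0 else if (i : ℕ) = 0 then n - 2
      else if (i : ℕ) = 1 then n - 1 else n - (i : ℕ))) = (i : ℕ)
    rcases (by omega : (i : ℕ) = 2 ∨ (i : ℕ) = 0 ∨ (i : ℕ) = 1 ∨
        ((i : ℕ) ≠ 2 ∧ (i : ℕ) ≠ 0 ∧ (i : ℕ) ≠ 1)) with h | h | h | ⟨e1, e2, e3⟩
    · rw [if_pos h, if_pos (show (0 : ℕ) = 0 from rfl)]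
      omega
    · rw [if_neg (show ¬(i : ℕ) = 2 by omega), if_pos h,
        if_neg (show ¬n - 2 = 0 by omega), if_pos (show n - 2 = n - 2 from rfl)]
      omega
    · rw [if_neg (show ¬(i : ℕ) = 2 by omega), if_neg (show ¬(i : ℕ) = 0 by omega),
        if_pos h, if_neg (show ¬n - 1 = 0 by omega), if_neg (show ¬n - 1 = n - 2 by omega),
        if_pos (show n - 1 = n - 1 from rfl)]
      omega
    · rw [if_neg e1, if_neg e2, if_neg e3, if_neg (show ¬n - (i : ℕ) = 0 by omega),
        if_neg (show ¬n - (i : ℕ) = n - 2 by omega), if_neg (show ¬n - (i : ℕ) = n - 1 by omega)]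
      omega

lemma gP_apply {n : ℕ} (hn : 7 ≤ n) (i : Fin n) :
    ((gP n hn i : Fin n) : ℕ) = if (i : ℕ) = 0 then 2 else if (i : ℕ) = n - 2 then 0
      else if (i : ℕ) = n - 1 then 1 else n - (i : ℕ) := rfl


set_option maxHeartbeats 1000000 in
theorem stmt15 (n : ℕ) (hn : 7 ≤ n) (hno : Odd n) :
    OrigamiEquiv (Tact (OB1 n)) (OB4 n) ∧
    OrigamiEquiv (TinvAct (OB2 n)) (OB4 n) ∧
    OrigamiEquiv (Sact (OB2 n)) (OB6 n) ∧
    OrigamiEquiv (TinvAct (OB3 n)) (OB5 n) ∧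
    OrigamiEquiv (Tact (OB3 n)) (OB6 n) := by
  have hB := fun i : Fin n => cyc_range'_apply 1 (n - 2) (by omega) (by omega) i
  have hC := fun i : Fin n => cyc_range'_apply 1 n (by omega) (by omega) i
  have hD := fun i : Fin n => cyc_range'_apply 3 (n - 2) (by omega) (by omega) i
  have h1 : cyc n (List.range' 1 (n - 2)) * (cyc n [n - 2, n - 1, n])⁻¹
      = cyc n (List.range' 1 (n - 2) ++ [n, n - 1]) := by
    rw [mul_inv_eq_iff_eq_mul]
    apply Equiv.ext; intro i
    apply Fin.ext
    rw [Perm.mul_apply, hB i, F_apply hn, A_apply hn i]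
    have := i.isLt
    split_ifs <;> omega
  have h2 : cyc n (List.range' 1 n) * cyc n [n - 2, n - 1, n]
      = cyc n (List.range' 1 (n - 2) ++ [n, n - 1]) := by
    apply Equiv.ext; intro i
    apply Fin.ext
    rw [Perm.mul_apply, hC _, A_apply hn i, F_apply hn i]
    have := i.isLt
    split_ifs <;> omega
  have e1 : ∀ i : Fin n, ((gP n hn) ((cyc n [n - 2, n - 1, n]) i) : ℕ) =
      (if (i : ℕ) + 3 = n then 0 else if (i : ℕ) + 2 = n then 1 else if (i : ℕ) + 1 = n then 3
       else if (i : ℕ) = 0 then 2 else n - (i : ℕ)) := by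
    intro i
    rw [gP_apply hn, A_apply hn i]
    have := i.isLt
    split_ifs <;> omega
  have e2 : ∀ i : Fin n, ((gP n hn) ((cyc n (List.range' 1 n)) i) : ℕ) =
      (if (i : ℕ) + 1 = n then 2 else if (i : ℕ) + 3 = n then 0 else if (i : ℕ) + 2 = n then 1
       else n - 1 - (i : ℕ)) := by
    intro i
    have hi := i.isLt
    rw [gP_apply hn, hC i]
    rcases (by omega : (i : ℕ) + 1 = n ∨ (i : ℕ) + 1 < n) with h | h
    · rw [if_neg (show ¬((i : ℕ) + 1 < 1 ∨ 1 + n ≤ (i : ℕ) + 1) by omega),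
        if_neg (show ¬((i : ℕ) + 2 < 1 + n) by omega),
        if_pos (show (0 : ℕ) = 0 from rfl), if_pos h]
    · rw [if_neg (show ¬((i : ℕ) + 1 < 1 ∨ 1 + n ≤ (i : ℕ) + 1) by omega),
        if_pos (show (i : ℕ) + 2 < 1 + n by omega),
        if_neg (show ¬((i : ℕ) + 1 = 0) by omega), if_neg (show ¬((i : ℕ) + 1 = n) by omega)]
      split_ifs <;> omega
  have h3a : gP n hn * (cyc n [n - 2, n - 1, n] * (cyc n (List.range' 1 n))⁻¹) * (gP n hn)⁻¹
      = cyc n (List.range' 3 (n - 2)) := by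
    rw [mul_inv_eq_iff_eq_mul, ← mul_assoc, mul_inv_eq_iff_eq_mul]
    apply Equiv.ext; intro i
    apply Fin.ext
    simp only [Perm.mul_apply]
    rw [e1 i, hD _, e2 i]
    have := i.isLt
    split_ifs <;> omega
  have h3b : gP n hn * cyc n (List.range' 1 n) * (gP n hn)⁻¹
      = cyc n ([1, 2, 3] ++ (List.range' 4 (n - 3)).reverse) := by
    rw [mul_inv_eq_iff_eq_mul]
    apply Equiv.ext; intro i
    apply Fin.ext
    simp only [Perm.mul_apply]
    rw [e2 i, G_apply hn, gP_apply hn i]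
    have := i.isLt
    split_ifs <;> omega
  have h4 : cyc n [1, 2, 3] * cyc n (List.range' 3 (n - 2)) = cyc n (List.range' 1 n) := by
    apply Equiv.ext; intro i
    apply Fin.ext
    rw [Perm.mul_apply, E_apply hn, hD i, hC i]
    have := i.isLt
    split_ifs <;> omega
  have h5 : cyc n [1, 2, 3] * (cyc n (List.range' 3 (n - 2)))⁻¹
      = cyc n ([1, 2, 3] ++ (List.range' 4 (n - 3)).reverse) := by
    rw [mul_inv_eq_iff_eq_mul]
    apply Equiv.ext; intro i
    apply Fin.ext
    rw [Perm.mul_apply, E_apply hn i, G_apply hn, hD i]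
    have := i.isLt
    split_ifs <;> omega
  refine ⟨⟨1, ?_, ?_⟩, ⟨1, ?_, ?_⟩, ⟨gP n hn, ?_, ?_⟩, ⟨1, ?_, ?_⟩, ⟨1, ?_, ?_⟩⟩
  · simp [Tact, OB1, OB4]
  · simp only [Tact, OB1, OB4, inv_one, mul_one, one_mul]; exact h1
  · simp [TinvAct, OB2, OB4]
  · simp only [TinvAct, OB2, OB4, inv_one, mul_one, one_mul]; exact h2
  · simp only [Sact, OB2, OB6]; exact h3a
  · simp only [Sact, OB2, OB6]; exact h3b
  · simp [TinvAct, OB3, OB5]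
  · simp only [TinvAct, OB3, OB5, inv_one, mul_one, one_mul]; exact h4
  · simp [Tact, OB3, OB6]
  · simp only [Tact, OB3, OB6, inv_one, mul_one, one_mul]; exact h5
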